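/- arXiv:1012.5437 — 5 statements merged into one kernel-verified Lean document; each statement's English description precedes it below -/
import Mathlib

section
/- Suppose a ≥ 1, a·(m+1) ≠ b·(n+1) (i.e. s₁ ≠ s₂), and moreover d = 0 or d·(n+1) ≠ a·(m+1) (i.e. s₁ ≠ s₃ when s₃ is defined). Then lim_{s→s₁} (s−s₁)·Z_{n,m}(s) = 1/(a·(m+1) − b·(n+1)), which is nonzero; consequently s₁ = −(n+1)/a is a pole of order exactly one of Z_{n,m}. -/
/-- The local topological zeta function of the monomial ideal
`I = (x^a y^b, x^c y^d) ⊆ ℂ[x,y]` with respect to the volume form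
`x^n y^m dx ∧ dy`, as a function `ℚ → ℚ`. -/
noncomputable def Z (a b c d n m : ℕ) (s : ℚ) : ℚ :=
  ((c : ℚ) - a) /
      (((a : ℚ) * s + n + 1) *
        (((b : ℚ) * c - (a : ℚ) * d) * s + ((b : ℚ) - d) * (n + 1) + ((c : ℚ) - a) * (m + 1))) +
    ((b : ℚ) - d) /
      ((((b : ℚ) * c - (a : ℚ) * d) * s + ((b : ℚ) - d) * (n + 1) + ((c : ℚ) - a) * (m + 1)) *
        ((d : ℚ) * s + m + 1))

/-- `s₀` is a pole of order `k` of `Z` if `lim_{s → s₀} (s - s₀)^k * Z s`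
exists and is nonzero. -/
def IsPoleOfOrder (Z : ℚ → ℚ) (s₀ : ℚ) (k : ℕ) : Prop :=
  ∃ L : ℚ, L ≠ 0 ∧
    Filter.Tendsto (fun s => (s - s₀) ^ k * Z s) (nhdsWithin s₀ {s₀}ᶜ) (nhds L)

/-- `s₀` is a pole of `Z` if it is a pole of some order `k ≥ 1`. -/
def IsPole (Z : ℚ → ℚ) (s₀ : ℚ) : Prop :=
  ∃ k : ℕ, 1 ≤ k ∧ IsPoleOfOrder Z s₀ k

/-! Near `s₁ = -(n+1)/a` the first summand of `Z` is `g s / (a (s - s₁))` with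
`g s = (c - a) / midFactor s`. Both `a · midFactor s₁ = (c - a) (a (m+1) - b (n+1))` and
`d s₁ + m + 1 = (a (m+1) - d (n+1)) / a` are nonzero, so `g` and the second summand are
continuous at `s₁`. Hence `(s - s₁) Z(s) → g s₁ / a = 1 / (a (m+1) - b (n+1))`, and any further
power of `s - s₁` sends the limit to `0`, which rules out every order other than one. -/

open Filter Topology

theorem tendsto_sub_mul_div_mul_sub {K : Type*} [Field K] [TopologicalSpace K] [ContinuousMul K]
    {g : K → K} {α s₀ : K} (hα : α ≠ 0) (hg : ContinuousAt g s₀) :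
    Tendsto (fun s => (s - s₀) * (g s / (α * (s - s₀)))) (𝓝[≠] s₀) (𝓝 (g s₀ / α)) := by
  refine ((hg.tendsto.div_const α).mono_left nhdsWithin_le_nhds).congr' ?_
  filter_upwards [self_mem_nhdsWithin] with s hs
  have : s - s₀ ≠ 0 := sub_ne_zero.mpr hs
  field_simp

theorem tendsto_sub_mul_of_continuousAt {R : Type*} [Ring R] [TopologicalSpace R]
    [IsTopologicalRing R] {h : R → R} {s₀ : R} (hh : ContinuousAt h s₀) :
    Tendsto (fun s => (s - s₀) * h s) (𝓝 s₀) (𝓝 0) := by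
  simpa using ((continuous_sub_right s₀).tendsto s₀).mul hh.tendsto

theorem IsPoleOfOrder.not_of_lt {f : ℚ → ℚ} {s₀ : ℚ} {k j : ℕ} (hk : IsPoleOfOrder f s₀ k)
    (hkj : k < j) : ¬ IsPoleOfOrder f s₀ j := by
  obtain ⟨L, -, hL⟩ := hk
  rintro ⟨L', hL'0, hL'⟩
  have hpow : Tendsto (fun s => (s - s₀) ^ (j - k)) (𝓝[≠] s₀) (𝓝 0) := by
    refine (((continuous_sub_right s₀).pow _).tendsto' s₀ 0 ?_).mono_left nhdsWithin_le_nhds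
    simp only [Pi.pow_apply, sub_self, zero_pow (Nat.sub_ne_zero_of_lt hkj)]
  have hzero : Tendsto (fun s => (s - s₀) ^ j * f s) (𝓝[≠] s₀) (𝓝 0) := by
    refine (zero_mul L ▸ hpow.mul hL).congr fun s => ?_
    rw [← mul_assoc, ← pow_add, Nat.sub_add_cancel hkj.le]
  exact hL'0 (tendsto_nhds_unique hL' hzero)

namespace Z

variable (a b c d n m : ℕ)

def midFactor (s : ℚ) : ℚ :=
  ((b : ℚ) * c - (a : ℚ) * d) * s + ((b : ℚ) - d) * (n + 1) + ((c : ℚ) - a) * (m + 1)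

variable {a}

theorem eq_div_mul_sub (ha : a ≠ 0) (s : ℚ) :
    Z a b c d n m s =
      ((c : ℚ) - a) / midFactor a b c d n m s / (a * (s - (-((n : ℚ) + 1) / a))) +
        ((b : ℚ) - d) / (midFactor a b c d n m s * ((d : ℚ) * s + m + 1)) := by
  have ha' : (a : ℚ) ≠ 0 := Nat.cast_ne_zero.mpr ha
  rw [Z, midFactor, div_mul_eq_div_div_swap]
  congr 2
  field_simp
  ring

theorem mul_midFactor_at_pole (ha : a ≠ 0) :
    a * midFactor a b c d n m (-((n : ℚ) + 1) / a) =
      ((c : ℚ) - a) * ((a : ℚ) * (m + 1) - (b : ℚ) * (n + 1)) := by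
  have ha' : (a : ℚ) ≠ 0 := Nat.cast_ne_zero.mpr ha
  rw [midFactor]
  field_simp
  ring

theorem tendsto_sub_mul (ha : a ≠ 0) (hac : a ≠ c) (h12 : a * (m + 1) ≠ b * (n + 1))
    (h13 : d * (n + 1) ≠ a * (m + 1)) :
    Tendsto (fun s => (s - (-((n : ℚ) + 1) / a)) * Z a b c d n m s)
      (𝓝[≠] (-((n : ℚ) + 1) / a)) (𝓝 (1 / ((a : ℚ) * (m + 1) - (b : ℚ) * (n + 1)))) := by
  set s₁ : ℚ := -((n : ℚ) + 1) / a with hs₁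
  have ha' : (a : ℚ) ≠ 0 := Nat.cast_ne_zero.mpr ha
  have hca : (c : ℚ) - a ≠ 0 := sub_ne_zero.mpr (Nat.cast_injective.ne hac.symm)
  have h12' : (a : ℚ) * (m + 1) - (b : ℚ) * (n + 1) ≠ 0 :=
    sub_ne_zero.mpr (by exact_mod_cast h12)
  have hM : a * midFactor a b c d n m s₁ = _ := mul_midFactor_at_pole b c d n m ha
  have hM0 : midFactor a b c d n m s₁ ≠ 0 := by
    rintro h
    rw [h, mul_zero] at hM
    exact mul_ne_zero hca h12' hM.symm
  have hD0 : (d : ℚ) * s₁ + m + 1 ≠ 0 := by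
    have : (a : ℚ) * ((d : ℚ) * s₁ + m + 1) = a * (m + 1) - d * (n + 1) := by
      rw [hs₁]; field_simp; ring
    refine right_ne_zero_of_mul (this ▸ sub_ne_zero.mpr ?_)
    exact_mod_cast h13.symm
  have hMc : Continuous (midFactor a b c d n m) := by unfold midFactor; fun_prop
  have hg : ContinuousAt (fun s => ((c : ℚ) - a) / midFactor a b c d n m s) s₁ :=
    continuousAt_const.div hMc.continuousAt hM0
  have hh : ContinuousAt
      (fun s => ((b : ℚ) - d) / (midFactor a b c d n m s * ((d : ℚ) * s + m + 1))) s₁ :=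
    continuousAt_const.div (hMc.continuousAt.mul (by fun_prop)) (mul_ne_zero hM0 hD0)
  have hfirst := tendsto_sub_mul_div_mul_sub ha' hg
  have hsecond :=
    (tendsto_sub_mul_of_continuousAt hh).mono_left (nhdsWithin_le_nhds (s := {s₁}ᶜ))
  convert hfirst.add hsecond using 2 with s
  · rw [eq_div_mul_sub b c d n m ha, mul_add]
  · rw [add_zero, div_div, mul_comm _ (a : ℚ), hM]
    field_simp

end Z

theorem stmt0_general (a b c d n m : ℕ) (hac : a < c) (ha : 1 ≤ a)
    (h12 : a * (m + 1) ≠ b * (n + 1))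
    (h13 : d = 0 ∨ d * (n + 1) ≠ a * (m + 1)) :
    Filter.Tendsto (fun s => (s - (-((n : ℚ) + 1) / a)) * Z a b c d n m s)
        (nhdsWithin (-((n : ℚ) + 1) / a) {(-((n : ℚ) + 1) / a)}ᶜ)
        (nhds (1 / ((a : ℚ) * (m + 1) - (b : ℚ) * (n + 1)))) ∧
      1 / ((a : ℚ) * (m + 1) - (b : ℚ) * (n + 1)) ≠ 0 ∧
      IsPoleOfOrder (Z a b c d n m) (-((n : ℚ) + 1) / a) 1 ∧
      ∀ k : ℕ, 1 ≤ k → k ≠ 1 → ¬ IsPoleOfOrder (Z a b c d n m) (-((n : ℚ) + 1) / a) k := by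
  have h13' : d * (n + 1) ≠ a * (m + 1) := by
    rcases h13 with rfl | h
    · rw [zero_mul]; exact (Nat.mul_pos ha m.succ_pos).ne
    · exact h
  have hlim := Z.tendsto_sub_mul b c d n m (by omega) hac.ne h12 h13'
  have hL : 1 / ((a : ℚ) * (m + 1) - (b : ℚ) * (n + 1)) ≠ 0 :=
    one_div_ne_zero (sub_ne_zero.mpr (by exact_mod_cast h12))
  have hpole : IsPoleOfOrder (Z a b c d n m) (-((n : ℚ) + 1) / a) 1 :=
    ⟨_, hL, by simpa only [pow_one] using hlim⟩
  exact ⟨hlim, hL, hpole, fun k hk hk1 => hpole.not_of_lt (by omega)⟩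

theorem stmt0 (a b c d n m : ℕ) (hac : a < c) (hdb : d < b) (ha : 1 ≤ a)
    (h12 : a * (m + 1) ≠ b * (n + 1))
    (h13 : d = 0 ∨ d * (n + 1) ≠ a * (m + 1)) :
    Filter.Tendsto (fun s => (s - (-((n : ℚ) + 1) / a)) * Z a b c d n m s)
        (nhdsWithin (-((n : ℚ) + 1) / a) {(-((n : ℚ) + 1) / a)}ᶜ)
        (nhds (1 / ((a : ℚ) * (m + 1) - (b : ℚ) * (n + 1)))) ∧
      1 / ((a : ℚ) * (m + 1) - (b : ℚ) * (n + 1)) ≠ 0 ∧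
      IsPoleOfOrder (Z a b c d n m) (-((n : ℚ) + 1) / a) 1 ∧
      ∀ k : ℕ, 1 ≤ k → k ≠ 1 → ¬ IsPoleOfOrder (Z a b c d n m) (-((n : ℚ) + 1) / a) k :=
  stmt0_general a b c d n m hac ha h12 h13
end

section
/- Suppose a ≥ 1, d ≥ 1, d·(n+1) = a·(m+1) (i.e. s₁ = s₃), and a·(m+1) ≠ b·(n+1) (i.e. s₁ ≠ s₂). Then lim_{s→s₁} (s−s₁)·Z_{n,m}(s) = (1/(a·(m+1) − b·(n+1)))·(1 + a·(b−d)/(d·(c−a))), which is nonzero; consequently s₁ is a pole of order exactly one of Z_{n,m}. -/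
/-!
When `s₁ = s₃` both outer factors of the denominators of `Z` vanish to first order at `s₁`:
`a s + n + 1 = a (s - s₁)` and `d s + m + 1 = d (s - s₁)`. Hence, away from `s₁`,
`(s - s₁) Z(s) = ((c - a)/a + (b - d)/d) / Q(s)`, with `Q` the middle factor. Since `s₁ ≠ s₂`,
`Q(s₁) ≠ 0`, so the right-hand side is continuous at `s₁` with a nonzero value, which is the
claimed limit. The order of a pole is unique, so `s₁` is a pole of no order other than one.
-/

open Filter Topology

lemma IsPoleOfOrder.eq {f : ℚ → ℚ} {s₀ : ℚ} {k l : ℕ} (hk : IsPoleOfOrder f s₀ k)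
    (hl : IsPoleOfOrder f s₀ l) : k = l := by
  wlog hkl : k < l generalizing k l
  · rcases (not_lt.1 hkl).lt_or_eq with h | h
    · exact (this hl hk h).symm
    · exact h.symm
  obtain ⟨L, -, hL⟩ := hk
  obtain ⟨L', hL'ne, hL'⟩ := hl
  have hvanish : Tendsto (fun s => (s - s₀) ^ (l - k)) (𝓝[≠] s₀) (𝓝 0) := by
    refine (((continuous_id.sub continuous_const).pow _).tendsto' s₀ 0 ?_).mono_left
      nhdsWithin_le_nhds
    simp [Nat.sub_ne_zero_of_lt hkl]
  refine absurd (tendsto_nhds_unique hL' ?_) hL'ne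
  refine (zero_mul L ▸ hvanish.mul hL).congr fun s => ?_
  rw [← mul_assoc, ← pow_add, Nat.sub_add_cancel hkl.le]

section

variable {a b c d n m : ℕ}

/-- The factor of the denominators of `Z` coming from the compact edge of the Newton polygon
of `I`. -/
def edgeForm (a b c d n m : ℕ) (s : ℚ) : ℚ :=
  ((b : ℚ) * c - (a : ℚ) * d) * s + ((b : ℚ) - d) * (n + 1) + ((c : ℚ) - a) * (m + 1)

lemma edgeForm_neg_div (ha : a ≠ 0) (h13 : d * (n + 1) = a * (m + 1)) :
    edgeForm a b c d n m (-((n : ℚ) + 1) / a) =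
      ((n : ℚ) + 1) * ((a : ℚ) - c) * ((b : ℚ) - d) / a := by
  have h13' : (d : ℚ) * (n + 1) = a * (m + 1) := by exact_mod_cast h13
  unfold edgeForm
  field_simp
  linear_combination (a - (c : ℚ)) * h13'

lemma edgeForm_neg_div_ne_zero (ha : a ≠ 0) (hac : a < c) (hdb : d < b)
    (h13 : d * (n + 1) = a * (m + 1)) : edgeForm a b c d n m (-((n : ℚ) + 1) / a) ≠ 0 := by
  have hac' : (a : ℚ) < c := by exact_mod_cast hac
  have hdb' : (d : ℚ) < b := by exact_mod_cast hdb
  rw [edgeForm_neg_div ha h13]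
  have : ((n : ℚ) + 1) * ((a : ℚ) - c) * ((b : ℚ) - d) ≠ 0 := by
    apply mul_ne_zero (mul_ne_zero _ _) <;> linarith
  exact div_ne_zero this (by exact_mod_cast ha)

lemma sub_mul_Z_eq (ha : a ≠ 0) (hd : d ≠ 0) (h13 : d * (n + 1) = a * (m + 1)) {s : ℚ}
    (hs : s ≠ -((n : ℚ) + 1) / a) :
    (s - -((n : ℚ) + 1) / a) * Z a b c d n m s =
      (((c : ℚ) - a) / a + ((b : ℚ) - d) / d) / edgeForm a b c d n m s := by
  have h13' : (d : ℚ) * (n + 1) = a * (m + 1) := by exact_mod_cast h13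
  have ha' : (a : ℚ) ≠ 0 := by exact_mod_cast ha
  have hd' : (d : ℚ) ≠ 0 := by exact_mod_cast hd
  have hs' : s - -((n : ℚ) + 1) / a ≠ 0 := sub_ne_zero.mpr hs
  have h1 : (a : ℚ) * s + n + 1 = a * (s - -((n : ℚ) + 1) / a) := by field_simp; ring
  have h3 : (d : ℚ) * s + m + 1 = d * (s - -((n : ℚ) + 1) / a) := by
    field_simp; linear_combination -h13'
  rw [Z, h1, h3, ← edgeForm]
  generalize s - -((n : ℚ) + 1) / a = t at hs' ⊢
  by_cases hQ : edgeForm a b c d n m s = 0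
  · -- both sides are junk values `x / 0 = 0`
    simp [hQ]
  · field_simp

lemma tendsto_sub_mul_Z (ha : a ≠ 0) (hd : d ≠ 0) (hac : a < c) (hdb : d < b)
    (h13 : d * (n + 1) = a * (m + 1)) :
    Tendsto (fun s => (s - -((n : ℚ) + 1) / a) * Z a b c d n m s) (𝓝[≠] (-((n : ℚ) + 1) / a))
      (𝓝 ((((c : ℚ) - a) / a + ((b : ℚ) - d) / d) /
        edgeForm a b c d n m (-((n : ℚ) + 1) / a))) := by
  have hcont : Continuous (edgeForm a b c d n m) := by unfold edgeForm; fun_prop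
  refine ((continuousAt_const.div hcont.continuousAt
    (edgeForm_neg_div_ne_zero ha hac hdb h13)).tendsto.mono_left nhdsWithin_le_nhds).congr' ?_
  filter_upwards [self_mem_nhdsWithin] with s hs using (sub_mul_Z_eq ha hd h13 hs).symm

lemma residue_eq (ha : a ≠ 0) (hd : d ≠ 0) (hac : a < c) (hdb : d < b)
    (h13 : d * (n + 1) = a * (m + 1)) (h12 : a * (m + 1) ≠ b * (n + 1)) :
    (((c : ℚ) - a) / a + ((b : ℚ) - d) / d) / edgeForm a b c d n m (-((n : ℚ) + 1) / a) =
      (1 / ((a : ℚ) * (m + 1) - (b : ℚ) * (n + 1))) *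
        (1 + (a : ℚ) * ((b : ℚ) - d) / ((d : ℚ) * ((c : ℚ) - a))) := by
  have h13' : (d : ℚ) * (n + 1) = a * (m + 1) := by exact_mod_cast h13
  have h12' : (a : ℚ) * (m + 1) - b * (n + 1) ≠ 0 := sub_ne_zero.mpr (by exact_mod_cast h12)
  have hca : (c : ℚ) - a ≠ 0 := sub_ne_zero.mpr (by exact_mod_cast hac.ne')
  have hbd : (b : ℚ) - d ≠ 0 := sub_ne_zero.mpr (by exact_mod_cast hdb.ne')
  have hac' : (a : ℚ) - c ≠ 0 := sub_ne_zero.mpr (by exact_mod_cast hac.ne)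
  rw [edgeForm_neg_div ha h13]
  field_simp
  linear_combination ((a : ℚ) - c) * ((c - a) * d + a * (b - d)) * h13'

lemma residue_ne_zero (hac : a < c) (hdb : d < b) (h12 : a * (m + 1) ≠ b * (n + 1)) :
    (1 / ((a : ℚ) * (m + 1) - (b : ℚ) * (n + 1))) *
      (1 + (a : ℚ) * ((b : ℚ) - d) / ((d : ℚ) * ((c : ℚ) - a))) ≠ 0 := by
  have h12' : (a : ℚ) * (m + 1) - b * (n + 1) ≠ 0 := sub_ne_zero.mpr (by exact_mod_cast h12)
  have hca : (0 : ℚ) ≤ c - a := sub_nonneg.mpr (by exact_mod_cast hac.le)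
  have hbd : (0 : ℚ) ≤ b - d := sub_nonneg.mpr (by exact_mod_cast hdb.le)
  have hratio : 0 ≤ (a : ℚ) * ((b : ℚ) - d) / ((d : ℚ) * ((c : ℚ) - a)) := by positivity
  exact mul_ne_zero (one_div_ne_zero h12') (by linarith)

end

theorem stmt1 (a b c d n m : ℕ) (hac : a < c) (hdb : d < b) (ha : 1 ≤ a) (hd : 1 ≤ d)
    (h13 : d * (n + 1) = a * (m + 1))
    (h12 : a * (m + 1) ≠ b * (n + 1)) :
    Filter.Tendsto (fun s => (s - (-((n : ℚ) + 1) / a)) * Z a b c d n m s)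
        (nhdsWithin (-((n : ℚ) + 1) / a) {(-((n : ℚ) + 1) / a)}ᶜ)
        (nhds ((1 / ((a : ℚ) * (m + 1) - (b : ℚ) * (n + 1))) *
          (1 + (a : ℚ) * ((b : ℚ) - d) / ((d : ℚ) * ((c : ℚ) - a))))) ∧
      (1 / ((a : ℚ) * (m + 1) - (b : ℚ) * (n + 1))) *
          (1 + (a : ℚ) * ((b : ℚ) - d) / ((d : ℚ) * ((c : ℚ) - a))) ≠ 0 ∧
      IsPoleOfOrder (Z a b c d n m) (-((n : ℚ) + 1) / a) 1 ∧
      ∀ k : ℕ, 1 ≤ k → k ≠ 1 → ¬ IsPoleOfOrder (Z a b c d n m) (-((n : ℚ) + 1) / a) k := by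
  have ha₀ : a ≠ 0 := by omega
  have hd₀ : d ≠ 0 := by omega
  have hlim := residue_eq ha₀ hd₀ hac hdb h13 h12 ▸ tendsto_sub_mul_Z ha₀ hd₀ hac hdb h13
  have hL := residue_ne_zero hac hdb h12
  have hpole : IsPoleOfOrder (Z a b c d n m) (-((n : ℚ) + 1) / a) 1 :=
    ⟨_, hL, by simpa only [pow_one] using hlim⟩
  exact ⟨hlim, hL, hpole, fun k _ hk1 hk => hk1 (hk.eq hpole)⟩
end

section
/- All candidate-poles of Z_{n,m} are actual poles: for all natural numbers n, m, the point s₂ is a pole (of order one or two) of Z_{n,m}; if a ≥ 1 then s₁ is a pole (of order one or two) of Z_{n,m}; and if d ≥ 1 then s₃ is a pole (of order one or two) of Z_{n,m}. -/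
/-!
Write `A e k s = e * s + (k + 1)` and let `L` be the middle linear factor (with root `s₂`). Then
`Z = (c - a) / (A a n * L) + (b - d) / (L * A d m) = N / (A a n * L * A d m)` with numerator
`N = (c - a) * A d m + (b - d) * A a n = L - (c - a) * (b - d) * s`. Every factor is affine, so where
`N` does not vanish the order of a pole is the number of factors vanishing there.
At `s₂` we get `N = -(c - a) * (b - d) * s₂ ≠ 0`; since `N ≠ 0`, the two outer factors do not both
vanish, so the order is 1 or 2. At `s₁` we get `N = (c - a) * A d m`: either `N ≠ 0` and the order is
1 or 2 according as `L` vanishes, or `s₁ = s₃`, where the two terms combine into a simple pole with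
residue proportional to `(c - a) * d + (b - d) * a > 0`. The case of `s₃` is the case of `s₁` after
the symmetry `(a, b, c, d, n, m) ↦ (d, c, b, a, m, n)` of `Z`.
-/

section PoleCalculus

open Filter Topology

variable {F g : ℚ → ℚ} {s₀ : ℚ} {k : ℕ}

theorem IsPoleOfOrder.congr {G : ℚ → ℚ} (hF : IsPoleOfOrder F s₀ k) (hFG : F =ᶠ[𝓝[≠] s₀] G) :
    IsPoleOfOrder G s₀ k := by
  obtain ⟨L, hL, hlim⟩ := hF
  exact ⟨L, hL, hlim.congr' (hFG.mono fun s hs => by simp only [hs])⟩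

theorem isPoleOfOrder_zero (hg : ContinuousAt g s₀) (hg₀ : g s₀ ≠ 0) : IsPoleOfOrder g s₀ 0 :=
  ⟨g s₀, hg₀, by simpa using hg.continuousWithinAt.tendsto⟩

theorem IsPoleOfOrder.div (hF : IsPoleOfOrder F s₀ k) (hg : ContinuousAt g s₀) (hg₀ : g s₀ ≠ 0) :
    IsPoleOfOrder (fun s => F s / g s) s₀ k := by
  obtain ⟨L, hL, hlim⟩ := hF
  refine ⟨L / g s₀, div_ne_zero hL hg₀, ?_⟩
  exact (hlim.div hg.continuousWithinAt.tendsto hg₀).congr fun s => mul_div_assoc _ _ _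

theorem IsPoleOfOrder.div_affine_of_ne_zero {p r : ℚ} (hF : IsPoleOfOrder F s₀ k)
    (hs₀ : p * s₀ + r ≠ 0) : IsPoleOfOrder (fun s => F s / (p * s + r)) s₀ k :=
  hF.div (by fun_prop) hs₀

theorem IsPoleOfOrder.div_affine_of_eq_zero {p r : ℚ} (hF : IsPoleOfOrder F s₀ k) (hp : p ≠ 0)
    (hs₀ : p * s₀ + r = 0) : IsPoleOfOrder (fun s => F s / (p * s + r)) s₀ (k + 1) := by
  obtain ⟨L, hL, hlim⟩ := hF.div (g := fun _ => p) continuousAt_const hp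
  refine ⟨L, hL, hlim.congr' ?_⟩
  filter_upwards [self_mem_nhdsWithin] with s hs
  have hs' : s - s₀ ≠ 0 := sub_ne_zero.2 hs
  rw [show p * s + r = p * (s - s₀) by linear_combination hs₀]
  field_simp
  ring

theorem eventually_affine_ne_zero {p r : ℚ} (hpr : p ≠ 0 ∨ r ≠ 0) (s₀ : ℚ) :
    ∀ᶠ s in 𝓝[≠] s₀, p * s + r ≠ 0 := by
  by_cases hs₀ : p * s₀ + r = 0
  · have hp : p ≠ 0 := by rintro rfl; simp_all
    filter_upwards [self_mem_nhdsWithin] with s hs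
    rw [show p * s + r = p * (s - s₀) by linear_combination hs₀]
    exact mul_ne_zero hp (sub_ne_zero.2 hs)
  · exact ((continuous_const_mul p).add continuous_const).continuousAt.eventually_ne hs₀
      |>.filter_mono nhdsWithin_le_nhds

end PoleCalculus

namespace MonomialZeta

open Filter Topology

variable (a b c d n m : ℕ)

def A (s : ℚ) : ℚ := a * s + (n + 1)

def L (s : ℚ) : ℚ :=
  ((b : ℚ) * c - a * d) * s + (((b : ℚ) - d) * (n + 1) + ((c : ℚ) - a) * (m + 1))

def N (s : ℚ) : ℚ := ((c : ℚ) - a) * A d m s + ((b : ℚ) - d) * A a n s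

theorem Z_eq (s : ℚ) :
    Z a b c d n m s = ((c : ℚ) - a) / (A a n s * L a b c d n m s) +
      ((b : ℚ) - d) / (L a b c d n m s * A d m s) := by
  simp only [Z, A, L, add_assoc]

theorem Z_swap : Z a b c d n m = Z d c b a m n := by
  funext s
  simp only [Z]
  ring

theorem L_eq_N_add (s : ℚ) :
    L a b c d n m s = N a b c d n m s + ((c : ℚ) - a) * ((b : ℚ) - d) * s := by
  simp only [L, N, A]
  ring

theorem cast_ne_zero_of_A_eq_zero {a n : ℕ} {s : ℚ} (h : A a n s = 0) : (a : ℚ) ≠ 0 := by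
  rintro ha
  simp only [A, ha, zero_mul, zero_add] at h
  exact absurd h (by positivity)

theorem A_eq_mul_sub {a n : ℕ} {s₀ : ℚ} (h : A a n s₀ = 0) (s : ℚ) : A a n s = a * (s - s₀) := by
  simp only [A] at h ⊢
  linear_combination h

theorem Z_eq_div_of_ne_zero {s : ℚ} (hA : A a n s ≠ 0) (hB : A d m s ≠ 0) :
    Z a b c d n m s = N a b c d n m s / A a n s / L a b c d n m s / A d m s := by
  rw [Z_eq]
  by_cases hL : L a b c d n m s = 0
  · simp [hL]
  · simp only [N]
    field_simp

theorem Z_eventuallyEq_div (s₀ : ℚ) :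
    Z a b c d n m =ᶠ[𝓝[≠] s₀] fun s => N a b c d n m s / A a n s / L a b c d n m s / A d m s := by
  filter_upwards [eventually_affine_ne_zero (.inr (by positivity : (n : ℚ) + 1 ≠ 0)) s₀,
    eventually_affine_ne_zero (.inr (by positivity : (m : ℚ) + 1 ≠ 0)) s₀] with s hA hB
  exact Z_eq_div_of_ne_zero a b c d n m hA hB

variable {a b c d}

theorem mul_sub_mul_pos (hac : a < c) (hdb : d < b) : (0 : ℚ) < b * c - a * d := by
  have hac' : (a : ℚ) < c := by exact_mod_cast hac
  have hdb' : (d : ℚ) < b := by exact_mod_cast hdb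
  nlinarith [(Nat.cast_nonneg a : (0 : ℚ) ≤ a)]

theorem continuous_N : Continuous (N a b c d n m) := by
  unfold N A
  fun_prop

theorem isPoleOfOrder_one_or_two_of_L_eq_zero (hac : a < c) (hdb : d < b) {s₀ : ℚ}
    (hs₀ : L a b c d n m s₀ = 0) :
    IsPoleOfOrder (Z a b c d n m) s₀ 1 ∨ IsPoleOfOrder (Z a b c d n m) s₀ 2 := by
  have hα : (0 : ℚ) < c - a := sub_pos.2 (by exact_mod_cast hac)
  have hβ : (0 : ℚ) < b - d := sub_pos.2 (by exact_mod_cast hdb)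
  have hs₀0 : s₀ ≠ 0 := by
    rintro rfl
    simp only [L, mul_zero, zero_add] at hs₀
    nlinarith
  have hN : N a b c d n m s₀ ≠ 0 := by
    intro hN
    rw [L_eq_N_add, hN, zero_add] at hs₀
    exact mul_ne_zero (mul_ne_zero hα.ne' hβ.ne') hs₀0 hs₀
  have hN₀ := isPoleOfOrder_zero (continuous_N n m).continuousAt hN
  have hK := (mul_sub_mul_pos hac hdb).ne'
  have hZ := (Z_eventuallyEq_div a b c d n m s₀).symm
  by_cases hA : A a n s₀ = 0
  · have hB : A d m s₀ ≠ 0 := fun hB => hN (by simp [N, hA, hB])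
    exact .inr ((((hN₀.div_affine_of_eq_zero (cast_ne_zero_of_A_eq_zero hA) hA)
      |>.div_affine_of_eq_zero hK hs₀).div_affine_of_ne_zero hB).congr hZ)
  · have hNA := hN₀.div_affine_of_ne_zero hA
    by_cases hB : A d m s₀ = 0
    · exact .inr (((hNA.div_affine_of_eq_zero hK hs₀)
        |>.div_affine_of_eq_zero (cast_ne_zero_of_A_eq_zero hB) hB).congr hZ)
    · exact .inl (((hNA.div_affine_of_eq_zero hK hs₀).div_affine_of_ne_zero hB).congr hZ)

theorem isPoleOfOrder_one_or_two_of_A_eq_zero (hac : a < c) (hdb : d < b) {s₀ : ℚ}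
    (hs₀ : A a n s₀ = 0) :
    IsPoleOfOrder (Z a b c d n m) s₀ 1 ∨ IsPoleOfOrder (Z a b c d n m) s₀ 2 := by
  have hα : (0 : ℚ) < c - a := sub_pos.2 (by exact_mod_cast hac)
  have hβ : (0 : ℚ) < b - d := sub_pos.2 (by exact_mod_cast hdb)
  have ha := cast_ne_zero_of_A_eq_zero hs₀
  have hs₀0 : s₀ ≠ 0 := by
    rintro rfl
    simp only [A, mul_zero, zero_add] at hs₀
    exact absurd hs₀ (by positivity)
  by_cases hB : A d m s₀ = 0
  · -- `s₁ = s₃`: `N` vanishes there as well and cancels one of the two vanishing factors.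
    have hd := cast_ne_zero_of_A_eq_zero hB
    have hL : L a b c d n m s₀ ≠ 0 := by
      rw [L_eq_N_add, N, hs₀, hB]
      simpa using ⟨⟨hα.ne', hβ.ne'⟩, hs₀0⟩
    have hcoeff : (((c : ℚ) - a) * d + ((b : ℚ) - d) * a) / d ≠ 0 := by positivity
    refine .inl ((((isPoleOfOrder_zero continuousAt_const hcoeff).div_affine_of_eq_zero ha hs₀)
      |>.div_affine_of_ne_zero hL).congr ?_)
    filter_upwards [self_mem_nhdsWithin] with s hs
    change _ / A a n s / L a b c d n m s = Z a b c d n m s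
    rw [Z_eq, A_eq_mul_sub hs₀, A_eq_mul_sub hB]
    by_cases hLs : L a b c d n m s = 0
    · simp [hLs]
    · have hs' : s - s₀ ≠ 0 := sub_ne_zero.2 hs
      field_simp
  · have hN : N a b c d n m s₀ ≠ 0 := by simpa [N, hs₀] using ⟨hα.ne', hB⟩
    have hNA := (isPoleOfOrder_zero (continuous_N n m).continuousAt hN).div_affine_of_eq_zero ha hs₀
    have hZ := (Z_eventuallyEq_div a b c d n m s₀).symm
    by_cases hL : L a b c d n m s₀ = 0
    · exact .inr (((hNA.div_affine_of_eq_zero (mul_sub_mul_pos hac hdb).ne' hL)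
        |>.div_affine_of_ne_zero hB).congr hZ)
    · exact .inl (((hNA.div_affine_of_ne_zero hL).div_affine_of_ne_zero hB).congr hZ)

end MonomialZeta

theorem stmt6 (a b c d : ℕ) (hac : a < c) (hdb : d < b) :
    ∀ n m : ℕ,
      (IsPoleOfOrder (Z a b c d n m)
          (-(((b : ℚ) - d) * (n + 1) + ((c : ℚ) - a) * (m + 1)) /
            ((b : ℚ) * c - (a : ℚ) * d)) 1 ∨
        IsPoleOfOrder (Z a b c d n m)
          (-(((b : ℚ) - d) * (n + 1) + ((c : ℚ) - a) * (m + 1)) /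
            ((b : ℚ) * c - (a : ℚ) * d)) 2) ∧
      (1 ≤ a →
        IsPoleOfOrder (Z a b c d n m) (-((n : ℚ) + 1) / a) 1 ∨
          IsPoleOfOrder (Z a b c d n m) (-((n : ℚ) + 1) / a) 2) ∧
      (1 ≤ d →
        IsPoleOfOrder (Z a b c d n m) (-((m : ℚ) + 1) / d) 1 ∨
          IsPoleOfOrder (Z a b c d n m) (-((m : ℚ) + 1) / d) 2) := by
  intro n m
  have hA_root {e k : ℕ} (he : 1 ≤ e) : MonomialZeta.A e k (-((k : ℚ) + 1) / e) = 0 := by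
    have : (e : ℚ) ≠ 0 := by positivity
    simp only [MonomialZeta.A]
    field_simp
    ring
  refine ⟨MonomialZeta.isPoleOfOrder_one_or_two_of_L_eq_zero n m hac hdb ?_,
    fun ha => MonomialZeta.isPoleOfOrder_one_or_two_of_A_eq_zero n m hac hdb (hA_root ha),
    fun hd => ?_⟩
  · have := (MonomialZeta.mul_sub_mul_pos hac hdb).ne'
    simp only [MonomialZeta.L]
    field_simp
    ring
  · rw [MonomialZeta.Z_swap]
    exact MonomialZeta.isPoleOfOrder_one_or_two_of_A_eq_zero m n hdb hac (hA_root hd)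
end

section
/- Assume additionally a ≥ 1 and d ≥ 1, and define the set R ⊆ ℚ as the union of the three families: (i) −(i+1)/a for integers 0 ≤ i ≤ a−1; (ii) −((b−d)·(k+1) + (c−a)·(l+1))/(bc−ad) for natural numbers k, l with k < c, l < b, d·(k+a−c) ≤ a·l, and a·l < d·k + a·(b−d) (inequalities in ℤ); (iii) −(j+1)/d for integers 0 ≤ j ≤ d−1. (By the Budur–Mustață–Saito description, R is the set of roots of the Bernstein–Sato polynomial of the ideal I = (x^a y^b, x^c y^d).) Then for every r ∈ R there exist natural numbers n, m such that r is a pole of the rational function Z_{n,m}; in fact one may take (n,m) = (i,0) for family (i), (n,m) = (k,l) for family (ii), and (n,m) = (0,j) for family (iii). -/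
/-- The set of roots of the Bernstein–Sato polynomial of the ideal
`I = (x^a y^b, x^c y^d)`, following the Budur–Mustață–Saito description. -/
def BSRoots (a b c d : ℕ) : Set ℚ :=
  {r : ℚ |
    (∃ i : ℕ, i < a ∧ r = -((i : ℚ) + 1) / a) ∨
    (∃ k l : ℕ, k < c ∧ l < b ∧
      (d : ℤ) * ((k : ℤ) + a - c) ≤ (a : ℤ) * l ∧
      (a : ℤ) * l < (d : ℤ) * k + (a : ℤ) * ((b : ℤ) - d) ∧
      r = -(((b : ℚ) - d) * ((k : ℚ) + 1) + ((c : ℚ) - a) * ((l : ℚ) + 1)) /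
        ((b : ℚ) * c - (a : ℚ) * d)) ∨
    (∃ j : ℕ, j < d ∧ r = -((j : ℚ) + 1) / d)}

/-!
Write `Z = (c - a) / (ℓ₁ ℓ₂) + (b - d) / (ℓ₂ ℓ₃)` with the affine factors `ℓ₁ = a s + n + 1`,
`ℓ₃ = d s + m + 1` and the common factor `ℓ₂`; the candidate poles `s₁, s₂, s₃` are their zeros.
All three factors are positive at `s = 0` and satisfy `ℓ₂ = (b - d) ℓ₁ + (c - a) ℓ₃ + (b - d)(c - a) s`,
so they never vanish simultaneously, and at a zero of `ℓ₂` the numerator `(c - a) ℓ₃ + (b - d) ℓ₁`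
of `Z · ℓ₁ ℓ₂ ℓ₃` equals `-(b - d)(c - a) s ≠ 0`. Where `ℓ₁` and `ℓ₃` vanish together the two
simple poles have residues of the same sign and do not cancel. Hence every zero of a factor is a pole,
of order two exactly when `ℓ₂` vanishes together with `ℓ₁` or `ℓ₃`.
-/

open Filter Topology

lemma isPole_of_eventually_mul_eq {f g : ℚ → ℚ} {s₀ : ℚ} {k : ℕ} (hk : 1 ≤ k)
    (hg : ContinuousAt g s₀) (hg₀ : g s₀ ≠ 0)
    (h : ∀ᶠ s in 𝓝[≠] s₀, (s - s₀) ^ k * f s = g s) : IsPole f s₀ :=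
  ⟨k, hk, g s₀, hg₀, (tendsto_nhdsWithin_of_tendsto_nhds hg).congr' (h.mono fun _ hs ↦ hs.symm)⟩

lemma eventually_ne_zero_nhdsNE {f : ℚ → ℚ} {s₀ : ℚ} (hf : Continuous f) (h : f s₀ ≠ 0) :
    ∀ᶠ s in 𝓝[≠] s₀, f s ≠ 0 :=
  eventually_nhdsWithin_of_eventually_nhds (hf.continuousAt.eventually_ne h)

namespace Z

variable {a b c d n m : ℕ} {s₀ : ℚ}

def linFactor (a n : ℕ) (s : ℚ) : ℚ := a * s + n + 1

def commonFactor (a b c d n m : ℕ) (s : ℚ) : ℚ :=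
  ((b : ℚ) * c - (a : ℚ) * d) * s + ((b : ℚ) - d) * (n + 1) + ((c : ℚ) - a) * (m + 1)

lemma eq_linFactor_commonFactor (s : ℚ) :
    Z a b c d n m s = ((c : ℚ) - a) / (linFactor a n s * commonFactor a b c d n m s) +
      ((b : ℚ) - d) / (commonFactor a b c d n m s * linFactor d m s) := rfl

lemma swap : Z a b c d n m = Z d c b a m n := by
  ext s; simp only [Z]; ring

lemma commonFactor_eq (s : ℚ) :
    commonFactor a b c d n m s = ((b : ℚ) - d) * linFactor a n s + ((c : ℚ) - a) * linFactor d m s +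
      ((b : ℚ) - d) * ((c : ℚ) - a) * s := by
  simp only [linFactor, commonFactor]; ring

@[fun_prop] lemma continuous_linFactor : Continuous (linFactor a n) := by
  unfold linFactor; fun_prop

@[fun_prop] lemma continuous_commonFactor : Continuous (commonFactor a b c d n m) := by
  unfold commonFactor; fun_prop

lemma linFactor_eq_of_eq_zero (h : linFactor a n s₀ = 0) (s : ℚ) :
    linFactor a n s = a * (s - s₀) := by
  unfold linFactor at *; linear_combination h

lemma commonFactor_eq_of_eq_zero (h : commonFactor a b c d n m s₀ = 0) (s : ℚ) :
    commonFactor a b c d n m s = ((b : ℚ) * c - a * d) * (s - s₀) := by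
  unfold commonFactor at *; linear_combination h

lemma cast_pos_of_linFactor_eq_zero (h : linFactor a n s₀ = 0) : (0 : ℚ) < a := by
  rcases (Nat.cast_nonneg (α := ℚ) a).lt_or_eq with ha | ha
  · exact ha
  · simp [linFactor, ← ha] at h; linarith

lemma ne_zero_of_linFactor_eq_zero (h : linFactor a n s₀ = 0) : s₀ ≠ 0 := by
  rintro rfl; simp [linFactor] at h; linarith

lemma cast_mul_sub_mul_pos (hac : a < c) (hdb : d < b) : (0 : ℚ) < b * c - a * d := by
  have : a * d < b * c := by nlinarith
  rw [sub_pos]; exact_mod_cast this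

lemma ne_zero_of_commonFactor_eq_zero (hac : a < c) (hdb : d < b)
    (h : commonFactor a b c d n m s₀ = 0) : s₀ ≠ 0 := by
  have hca : (a : ℚ) < c := by exact_mod_cast hac
  have hbd : (d : ℚ) < b := by exact_mod_cast hdb
  rintro rfl
  simp only [commonFactor, mul_zero, zero_add] at h
  nlinarith

lemma isPole_of_linFactor_eq_zero_of_commonFactor_ne_zero (hac : a < c) (hdb : d < b)
    (h₁ : linFactor a n s₀ = 0) (h₂ : commonFactor a b c d n m s₀ ≠ 0) :
    IsPole (Z a b c d n m) s₀ := by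
  have ha := cast_pos_of_linFactor_eq_zero h₁
  have hca : (0 : ℚ) < c - a := sub_pos.2 (by exact_mod_cast hac)
  have hbd : (0 : ℚ) < b - d := sub_pos.2 (by exact_mod_cast hdb)
  by_cases h₃ : linFactor d m s₀ = 0
  · have hd := cast_pos_of_linFactor_eq_zero h₃
    refine isPole_of_eventually_mul_eq (k := 1) le_rfl
      (g := fun s ↦ ((c - a) / a + (b - d) / d) / commonFactor a b c d n m s)
      (by fun_prop (disch := exact h₂)) (div_ne_zero (by positivity) h₂) ?_
    filter_upwards [self_mem_nhdsWithin, eventually_ne_zero_nhdsNE (by fun_prop) h₂]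
      with s (hs : s ≠ s₀) hs₂
    rw [eq_linFactor_commonFactor, linFactor_eq_of_eq_zero h₁, linFactor_eq_of_eq_zero h₃]
    have := sub_ne_zero.2 hs
    field_simp
  · refine isPole_of_eventually_mul_eq (k := 1) le_rfl
      (g := fun s ↦ (c - a) / (a * commonFactor a b c d n m s) +
        (s - s₀) * (b - d) / (commonFactor a b c d n m s * linFactor d m s))
      (by fun_prop (disch := positivity)) (by simp [ha.ne', hca.ne', h₂]) ?_
    filter_upwards [self_mem_nhdsWithin, eventually_ne_zero_nhdsNE (by fun_prop) h₂,
      eventually_ne_zero_nhdsNE (by fun_prop) h₃] with s (hs : s ≠ s₀) hs₂ hs₃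
    rw [eq_linFactor_commonFactor, linFactor_eq_of_eq_zero h₁]
    have := sub_ne_zero.2 hs
    field_simp

lemma isPole_of_linFactor_eq_zero_of_commonFactor_eq_zero (hac : a < c) (hdb : d < b)
    (h₁ : linFactor a n s₀ = 0) (h₂ : commonFactor a b c d n m s₀ = 0) :
    IsPole (Z a b c d n m) s₀ := by
  have ha := cast_pos_of_linFactor_eq_zero h₁
  have hE := cast_mul_sub_mul_pos hac hdb
  have hca : (0 : ℚ) < c - a := sub_pos.2 (by exact_mod_cast hac)
  have hbd : (0 : ℚ) < b - d := sub_pos.2 (by exact_mod_cast hdb)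
  have h₃ : linFactor d m s₀ ≠ 0 := by
    intro h₃
    have key := commonFactor_eq (a := a) (b := b) (c := c) (d := d) (n := n) (m := m) s₀
    rw [h₁, h₂, h₃] at key
    have : ((b : ℚ) - d) * (c - a) * s₀ = 0 := by linear_combination -key
    simp [hbd.ne', hca.ne', ne_zero_of_linFactor_eq_zero h₁] at this
  refine isPole_of_eventually_mul_eq (k := 2) one_le_two
    (g := fun s ↦ (c - a) / (a * (b * c - a * d)) +
      (s - s₀) * (b - d) / ((b * c - a * d) * linFactor d m s))
    (by fun_prop (disch := positivity)) (by simp [ha.ne', hca.ne', hE.ne']) ?_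
  filter_upwards [self_mem_nhdsWithin, eventually_ne_zero_nhdsNE (by fun_prop) h₃]
    with s (hs : s ≠ s₀) hs₃
  rw [eq_linFactor_commonFactor, linFactor_eq_of_eq_zero h₁, commonFactor_eq_of_eq_zero h₂]
  have := sub_ne_zero.2 hs
  field_simp

lemma isPole_of_commonFactor_eq_zero_of_linFactor_ne_zero (hac : a < c) (hdb : d < b)
    (h₂ : commonFactor a b c d n m s₀ = 0) (h₁ : linFactor a n s₀ ≠ 0)
    (h₃ : linFactor d m s₀ ≠ 0) : IsPole (Z a b c d n m) s₀ := by
  have hE := cast_mul_sub_mul_pos hac hdb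
  have hca : (0 : ℚ) < c - a := sub_pos.2 (by exact_mod_cast hac)
  have hbd : (0 : ℚ) < b - d := sub_pos.2 (by exact_mod_cast hdb)
  have hs₀ := ne_zero_of_commonFactor_eq_zero hac hdb h₂
  have hres : (c - a) / (linFactor a n s₀ * (b * c - a * d)) +
      (b - d) / ((b * c - a * d) * linFactor d m s₀) =
      -((b - d) * (c - a) * s₀) / ((b * c - a * d) * linFactor a n s₀ * linFactor d m s₀) := by
    rw [commonFactor_eq] at h₂
    rw [div_add_div _ _ (by positivity) (by positivity), div_eq_div_iff (by positivity) (by positivity)]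
    linear_combination (b * c - a * d) ^ 2 * linFactor a n s₀ * linFactor d m s₀ * h₂
  refine isPole_of_eventually_mul_eq (k := 1) le_rfl
    (g := fun s ↦ (c - a) / (linFactor a n s * (b * c - a * d)) +
      (b - d) / ((b * c - a * d) * linFactor d m s))
    (by fun_prop (disch := positivity)) ?_ ?_
  · simp only [hres]
    exact div_ne_zero (neg_ne_zero.2 (by positivity)) (by positivity)
  filter_upwards [self_mem_nhdsWithin, eventually_ne_zero_nhdsNE (by fun_prop) h₁,
    eventually_ne_zero_nhdsNE (by fun_prop) h₃] with s (hs : s ≠ s₀) hs₁ hs₃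
  rw [eq_linFactor_commonFactor, commonFactor_eq_of_eq_zero h₂]
  have := sub_ne_zero.2 hs
  field_simp

lemma isPole_of_linFactor_left_eq_zero (hac : a < c) (hdb : d < b) (h : linFactor a n s₀ = 0) :
    IsPole (Z a b c d n m) s₀ := by
  by_cases h₂ : commonFactor a b c d n m s₀ = 0
  · exact isPole_of_linFactor_eq_zero_of_commonFactor_eq_zero hac hdb h h₂
  · exact isPole_of_linFactor_eq_zero_of_commonFactor_ne_zero hac hdb h h₂

lemma isPole_of_linFactor_right_eq_zero (hac : a < c) (hdb : d < b) (h : linFactor d m s₀ = 0) :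
    IsPole (Z a b c d n m) s₀ := by
  rw [swap]
  exact isPole_of_linFactor_left_eq_zero hdb hac h

lemma isPole_of_commonFactor_eq_zero (hac : a < c) (hdb : d < b)
    (h : commonFactor a b c d n m s₀ = 0) : IsPole (Z a b c d n m) s₀ := by
  by_cases h₁ : linFactor a n s₀ = 0
  · exact isPole_of_linFactor_left_eq_zero hac hdb h₁
  by_cases h₃ : linFactor d m s₀ = 0
  · exact isPole_of_linFactor_right_eq_zero hac hdb h₃
  exact isPole_of_commonFactor_eq_zero_of_linFactor_ne_zero hac hdb h h₁ h₃

lemma linFactor_neg_div_eq_zero (ha : a ≠ 0) : linFactor a n (-((n : ℚ) + 1) / a) = 0 := by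
  unfold linFactor
  field_simp
  ring

lemma commonFactor_neg_div_eq_zero (hac : a < c) (hdb : d < b) :
    commonFactor a b c d n m
      (-(((b : ℚ) - d) * ((n : ℚ) + 1) + ((c : ℚ) - a) * ((m : ℚ) + 1)) /
        ((b : ℚ) * c - (a : ℚ) * d)) = 0 := by
  have := (cast_mul_sub_mul_pos hac hdb).ne'
  unfold commonFactor
  field_simp
  ring

end Z

theorem stmt7_general (a b c d : ℕ) (hac : a < c) (hdb : d < b) :
    (∀ r ∈ BSRoots a b c d, ∃ n m : ℕ, IsPole (Z a b c d n m) r) ∧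
      (∀ i : ℕ, i < a → IsPole (Z a b c d i 0) (-((i : ℚ) + 1) / a)) ∧
      (∀ k l : ℕ, k < c → l < b →
        (d : ℤ) * ((k : ℤ) + a - c) ≤ (a : ℤ) * l →
        (a : ℤ) * l < (d : ℤ) * k + (a : ℤ) * ((b : ℤ) - d) →
        IsPole (Z a b c d k l)
          (-(((b : ℚ) - d) * ((k : ℚ) + 1) + ((c : ℚ) - a) * ((l : ℚ) + 1)) /
            ((b : ℚ) * c - (a : ℚ) * d))) ∧
      (∀ j : ℕ, j < d → IsPole (Z a b c d 0 j) (-((j : ℚ) + 1) / d)) := by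
  have family₁ (i : ℕ) (hi : i < a) : IsPole (Z a b c d i 0) (-((i : ℚ) + 1) / a) :=
    Z.isPole_of_linFactor_left_eq_zero hac hdb (Z.linFactor_neg_div_eq_zero (by omega))
  have family₂ (k l : ℕ) : IsPole (Z a b c d k l)
      (-(((b : ℚ) - d) * ((k : ℚ) + 1) + ((c : ℚ) - a) * ((l : ℚ) + 1)) /
        ((b : ℚ) * c - (a : ℚ) * d)) :=
    Z.isPole_of_commonFactor_eq_zero hac hdb (Z.commonFactor_neg_div_eq_zero hac hdb)
  have family₃ (j : ℕ) (hj : j < d) : IsPole (Z a b c d 0 j) (-((j : ℚ) + 1) / d) :=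
    Z.isPole_of_linFactor_right_eq_zero hac hdb (Z.linFactor_neg_div_eq_zero (by omega))
  refine ⟨?_, family₁, fun k l _ _ _ _ ↦ family₂ k l, family₃⟩
  rintro r (⟨i, hi, rfl⟩ | ⟨k, l, -, -, -, -, rfl⟩ | ⟨j, hj, rfl⟩)
  exacts [⟨i, 0, family₁ i hi⟩, ⟨k, l, family₂ k l⟩, ⟨0, j, family₃ j hj⟩]

theorem stmt7 (a b c d : ℕ) (hac : a < c) (hdb : d < b) (ha : 1 ≤ a) (hd : 1 ≤ d) :
    (∀ r ∈ BSRoots a b c d, ∃ n m : ℕ, IsPole (Z a b c d n m) r) ∧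
      (∀ i : ℕ, i < a → IsPole (Z a b c d i 0) (-((i : ℚ) + 1) / a)) ∧
      (∀ k l : ℕ, k < c → l < b →
        (d : ℤ) * ((k : ℤ) + a - c) ≤ (a : ℤ) * l →
        (a : ℤ) * l < (d : ℤ) * k + (a : ℤ) * ((b : ℤ) - d) →
        IsPole (Z a b c d k l)
          (-(((b : ℚ) - d) * ((k : ℚ) + 1) + ((c : ℚ) - a) * ((l : ℚ) + 1)) /
            ((b : ℚ) * c - (a : ℚ) * d))) ∧
      (∀ j : ℕ, j < d → IsPole (Z a b c d 0 j) (-((j : ℚ) + 1) / d)) :=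
  stmt7_general a b c d hac hdb
end

section
/- Let ν, ν′, ν₁, ν₂, ν₃ be natural numbers with ν ≥ 1, ν′ ≥ 1, ν₁ ≥ 3, ν₂ ≥ 4, ν₃ ≥ 7. Let S ⊆ ℕ × ℕ be the smallest set containing the pairs (1, ν), (1, ν′), (5, ν₁), (7, ν₂), (13, ν₃) and closed under the two rules: (i) if (N, μ) ∈ S and c ≥ 1 then (N, μ + c) ∈ S; (ii) if (N, μ) ∈ S, (N′, μ′) ∈ S and c ≥ 0 then (N + N′, μ + μ′ + c) ∈ S. Then every pair (N, μ) ∈ S satisfies 13·μ > 6·N; in particular, for every (N, μ) ∈ S with N ≠ 0 one has μ/N ≠ 6/13. -/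
/-- The set of pairs of numerical data `(N, μ)` of prime divisors that can occur
in a local embedded resolution of `(I, g·dx∧dy)` for `I = (xy⁵, x³y², x⁴y)` and
`g(0) = 0`: the smallest set containing the numerical data
`(1, ν), (1, ν'), (5, ν₁), (7, ν₂), (13, ν₃)` of the minimal principalization of `I`
and closed under the two blow-up rules. -/
inductive ResData (ν ν' ν₁ ν₂ ν₃ : ℕ) : ℕ × ℕ → Prop where
  | baseE : ResData ν ν' ν₁ ν₂ ν₃ (1, ν)
  | baseE' : ResData ν ν' ν₁ ν₂ ν₃ (1, ν')
  | base1 : ResData ν ν' ν₁ ν₂ ν₃ (5, ν₁)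
  | base2 : ResData ν ν' ν₁ ν₂ ν₃ (7, ν₂)
  | base3 : ResData ν ν' ν₁ ν₂ ν₃ (13, ν₃)
  | free : ∀ N μ c : ℕ, ResData ν ν' ν₁ ν₂ ν₃ (N, μ) → 1 ≤ c →
      ResData ν ν' ν₁ ν₂ ν₃ (N, μ + c)
  | inter : ∀ N μ N' μ' c : ℕ, ResData ν ν' ν₁ ν₂ ν₃ (N, μ) →
      ResData ν ν' ν₁ ν₂ ν₃ (N', μ') →
      ResData ν ν' ν₁ ν₂ ν₃ (N + N', μ + μ' + c)

theorem ResData.mul_fst_lt_mul_snd {ν ν' ν₁ ν₂ ν₃ a b : ℕ} (hE : a < b * ν) (hE' : a < b * ν')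
    (h₁ : 5 * a < b * ν₁) (h₂ : 7 * a < b * ν₂) (h₃ : 13 * a < b * ν₃) {p : ℕ × ℕ}
    (hp : ResData ν ν' ν₁ ν₂ ν₃ p) : a * p.1 < b * p.2 := by
  induction hp with
  | baseE => simpa using hE
  | baseE' => simpa using hE'
  | base1 => simpa [mul_comm a] using h₁
  | base2 => simpa [mul_comm a] using h₂
  | base3 => simpa [mul_comm a] using h₃
  | free N μ c _ _ ih =>
    calc a * N < b * μ := ih
      _ ≤ b * (μ + c) := Nat.mul_le_mul_left b (Nat.le_add_right μ c)
  | inter N μ N' μ' c _ _ ih ih' =>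
    calc a * (N + N') = a * N + a * N' := mul_add a N N'
      _ < b * μ + b * μ' := Nat.add_lt_add ih ih'
      _ ≤ b * (μ + μ' + c) := by
        rw [← mul_add]; exact Nat.mul_le_mul_left b (Nat.le_add_right _ c)

theorem div_ne_of_mul_lt_mul {N μ a b : ℕ} (hb : b ≠ 0) (hN : N ≠ 0) (h : a * N < b * μ) :
    (μ : ℚ) / N ≠ a / b :=
  ne_of_gt <| (div_lt_div_iff₀ (by positivity) (by positivity)).2 <| by
    rw [mul_comm (μ : ℚ)]; exact_mod_cast h

theorem stmt9 (ν ν' ν₁ ν₂ ν₃ : ℕ) (hν : 1 ≤ ν) (hν' : 1 ≤ ν')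
    (hν₁ : 3 ≤ ν₁) (hν₂ : 4 ≤ ν₂) (hν₃ : 7 ≤ ν₃) :
    ∀ N μ : ℕ, ResData ν ν' ν₁ ν₂ ν₃ (N, μ) →
      6 * N < 13 * μ ∧ (N ≠ 0 → (μ : ℚ) / (N : ℚ) ≠ 6 / 13) := by
  intro N μ h
  have hslope : 6 * N < 13 * μ :=
    ResData.mul_fst_lt_mul_snd (by omega) (by omega) (by omega) (by omega) (by omega) h
  exact ⟨hslope, fun hN => by exact_mod_cast div_ne_of_mul_lt_mul (by norm_num) hN hslope⟩
end
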